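/- Let m ≥ 2 and let τ ∈ S_m be cluster-free. For n ≥ 3, 2 ≤ l ≤ n-1, and 1 ≤ k, a ≤ n-l+1, let A^{(n)}_{l;k;a} denote the set of σ ∈ S_n with {σ_a, σ_{a+1}, …, σ_{a+l-1}} = {k, k+1, …, k+l-1}. Then |A^{(n)}_{l;k;a} ∩ S_n(τ)| = |{η ∈ S_{n-l+1}(τ) : η_a = k}| · |S_l(τ)|. -/

import Mathlib

open Filter

def Contains {n m : ℕ} (σ : Fin n → Fin n) (τ : Fin m → Fin m) : Prop :=
  ∃ f : Fin m → Fin n, StrictMono f ∧ ∀ j k : Fin m, σ (f j) < σ (f k) ↔ τ j < τ k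

def Avoids {n m : ℕ} (σ : Fin n → Fin n) (τ : Fin m → Fin m) : Prop :=
  ¬ Contains σ τ

def AvoidSet (n : ℕ) {m : ℕ} (τ : Equiv.Perm (Fin m)) : Set (Equiv.Perm (Fin n)) :=
  {σ : Equiv.Perm (Fin n) | Avoids ⇑σ ⇑τ}

def ClusterAt {n : ℕ} (l k a : ℕ) (σ : Equiv.Perm (Fin n)) : Prop :=
  (Finset.univ.filter fun i : Fin n => a ≤ (i : ℕ) + 1 ∧ (i : ℕ) + 1 < a + l).image
      (fun i => (σ i : ℕ) + 1) = Finset.Ico k (k + l)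

def ClusterEvent (n l k : ℕ) : Set (Equiv.Perm (Fin n)) :=
  {σ : Equiv.Perm (Fin n) | ∃ a : ℕ, 1 ≤ a ∧ a ≤ n - l + 1 ∧ ClusterAt l k a σ}

def ClusterFree {m : ℕ} (τ : Equiv.Perm (Fin m)) : Prop :=
  ∀ l a k : ℕ, 2 ≤ l → l ≤ m - 1 → 1 ≤ a → a + l ≤ m + 1 → ¬ ClusterAt l k a τ

def ContainsTightly12 {m : ℕ} (τ : Equiv.Perm (Fin m)) : Prop :=
  ∃ i j : Fin m, (j : ℕ) = (i : ℕ) + 1 ∧ (τ j : ℕ) = (τ i : ℕ) + 1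

def ContainsTightly21 {m : ℕ} (τ : Equiv.Perm (Fin m)) : Prop :=
  ∃ i j : Fin m, (j : ℕ) = (i : ℕ) + 1 ∧ (τ i : ℕ) = (τ j : ℕ) + 1

def perm123 : Equiv.Perm (Fin 3) := Equiv.refl (Fin 3)

def perm321 : Equiv.Perm (Fin 3) :=
  ⟨![2, 1, 0], ![2, 1, 0], by intro x; fin_cases x <;> rfl, by intro x; fin_cases x <;> rfl⟩

def p2413 : Equiv.Perm (Fin 4) :=
  ⟨![1, 3, 0, 2], ![2, 0, 3, 1], by intro x; fin_cases x <;> rfl, by intro x; fin_cases x <;> rfl⟩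

def p3142 : Equiv.Perm (Fin 4) :=
  ⟨![2, 0, 3, 1], ![1, 3, 0, 2], by intro x; fin_cases x <;> rfl, by intro x; fin_cases x <;> rfl⟩

def SepSet (n : ℕ) : Set (Equiv.Perm (Fin n)) :=
  {σ : Equiv.Perm (Fin n) | Avoids ⇑σ ⇑p2413 ∧ Avoids ⇑σ ⇑p3142}


namespace Stmt18A


/-- expand: embed positions, skipping the block `(c, c+L)` -/
def pE (c L i : ℕ) : ℕ := if i ≤ c then i else i + (L - 1)

/-- collapse: inverse of `pE`, sending the whole block `[c, c+L)` to `c`. -/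
def pC (c L i : ℕ) : ℕ := if i ≤ c then i else if i < c + L then c else i - (L - 1)

variable {c L i j n N : ℕ}

lemma pE_lt (hL : 1 ≤ L) (h : i < j) : pE c L i < pE c L j := by
  unfold pE; split_ifs <;> omega

lemma pE_inj (hL : 1 ≤ L) (h : pE c L i = pE c L j) : i = j := by
  unfold pE at h; split_ifs at h <;> omega

lemma pC_pE (hL : 1 ≤ L) : pC c L (pE c L i) = i := by
  unfold pE pC; split_ifs <;> omega

lemma pE_pC (hL : 1 ≤ L) (h : ¬(c ≤ i ∧ i < c + L)) : pE c L (pC c L i) = i := by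
  unfold pE pC; split_ifs <;> omega

lemma pC_block (h1 : c ≤ i) (h2 : i < c + L) : pC c L i = c := by
  unfold pC; split_ifs <;> omega

lemma pE_mem_block_iff (hL : 1 ≤ L) : (c ≤ pE c L i ∧ pE c L i < c + L) ↔ i = c := by
  unfold pE; split_ifs <;> omega

lemma pC_mono (hL : 1 ≤ L) (h : i ≤ j) : pC c L i ≤ pC c L j := by
  unfold pC; split_ifs <;> omega

lemma pC_lt (hL : 1 ≤ L) (h : i < j)
    (hb : ¬(c ≤ i ∧ i < c + L) ∨ ¬(c ≤ j ∧ j < c + L)) : pC c L i < pC c L j := by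
  unfold pC; split_ifs <;> omega

lemma pC_inj (hL : 1 ≤ L) (h : pC c L i = pC c L j) :
    i = j ∨ ((c ≤ i ∧ i < c + L) ∧ (c ≤ j ∧ j < c + L)) := by
  unfold pC at h; split_ifs at h <;> omega

lemma pC_eq_left_iff (hL : 1 ≤ L) : pC c L i = c ↔ (c ≤ i ∧ i < c + L) := by
  unfold pC; split_ifs <;> omega

lemma pE_bound (hn : N + L = n + 1) (hL : 1 ≤ L) (hc : c + 1 ≤ N) (h : i < N) : pE c L i < n := by
  unfold pE; split_ifs <;> omega

lemma pC_bound (hn : N + L = n + 1) (hL : 1 ≤ L) (hc : c + 1 ≤ N) (h : i < n) :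
    pC c L i < N := by
  unfold pC; split_ifs <;> omega

lemma card_filter_interval (n c L : ℕ) (h : c + L ≤ n) :
    (Finset.univ.filter fun i : Fin n => c ≤ (i : ℕ) ∧ (i : ℕ) < c + L).card = L := by
  have himg : (Finset.univ.filter fun i : Fin n => c ≤ (i : ℕ) ∧ (i : ℕ) < c + L).image
      Fin.val = Finset.Ico c (c + L) := by
    ext x
    simp only [Finset.mem_image, Finset.mem_filter, Finset.mem_univ, true_and, Finset.mem_Ico]
    constructor
    · rintro ⟨i, hi, rfl⟩; exact hi
    · rintro ⟨h1, h2⟩; exact ⟨⟨x, by omega⟩, ⟨h1, h2⟩, rfl⟩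
  have := Finset.card_image_of_injective
    (Finset.univ.filter fun i : Fin n => c ≤ (i : ℕ) ∧ (i : ℕ) < c + L) (Fin.val_injective)
  rw [himg] at this
  rw [← this, Nat.card_Ico]; omega





def BlockP {n : ℕ} (a0 k0 l : ℕ) (σ : Equiv.Perm (Fin n)) : Prop :=
  ∀ i : Fin n, a0 ≤ (i : ℕ) → (i : ℕ) < a0 + l → k0 ≤ (σ i : ℕ) ∧ (σ i : ℕ) < k0 + l

variable {n l a0 k0 : ℕ} {σ : Equiv.Perm (Fin n)}

lemma clusterAt_iff_blockP (ha : a0 + l ≤ n) (hk : k0 + l ≤ n) :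
    ClusterAt l (k0 + 1) (a0 + 1) σ ↔ BlockP a0 k0 l σ := by
  unfold ClusterAt
  constructor
  · intro h i h1 h2
    have hmem : (σ i : ℕ) + 1 ∈ Finset.Ico (k0 + 1) (k0 + 1 + l) := by
      rw [← h]
      exact Finset.mem_image.mpr ⟨i, Finset.mem_filter.mpr ⟨Finset.mem_univ _, by omega⟩, rfl⟩
    rw [Finset.mem_Ico] at hmem; omega
  · intro hP
    apply Finset.eq_of_subset_of_card_le
    · intro x hx
      obtain ⟨i, hi, rfl⟩ := Finset.mem_image.mp hx
      rw [Finset.mem_filter] at hi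
      have := hP i (by omega) (by omega)
      rw [Finset.mem_Ico]; omega
    · rw [Nat.card_Ico]
      have hinj : Function.Injective (fun i : Fin n => (σ i : ℕ) + 1) := by
        intro x y h
        simp only [add_left_inj] at h
        exact σ.injective (Fin.val_injective h)
      rw [Finset.card_image_of_injective _ hinj]
      have : (Finset.univ.filter fun i : Fin n =>
          a0 + 1 ≤ (i : ℕ) + 1 ∧ (i : ℕ) + 1 < a0 + 1 + l) =
          (Finset.univ.filter fun i : Fin n => a0 ≤ (i : ℕ) ∧ (i : ℕ) < a0 + l) := by
        apply Finset.filter_congr; intro i _; simp; omega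
      rw [this, card_filter_interval n a0 l ha]; omega

lemma blockP_rev (hP : BlockP a0 k0 l σ) (ha : a0 + l ≤ n) (hk : k0 + l ≤ n)
    (i : Fin n) (h1 : k0 ≤ (σ i : ℕ)) (h2 : (σ i : ℕ) < k0 + l) :
    a0 ≤ (i : ℕ) ∧ (i : ℕ) < a0 + l := by
  set Fp := Finset.univ.filter fun j : Fin n => a0 ≤ (j : ℕ) ∧ (j : ℕ) < a0 + l with hFp
  set Fv := Finset.univ.filter fun j : Fin n => k0 ≤ (j : ℕ) ∧ (j : ℕ) < k0 + l with hFv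
  have hsub : Fp.image σ ⊆ Fv := by
    intro x hx
    obtain ⟨j, hj, rfl⟩ := Finset.mem_image.mp hx
    rw [hFp, Finset.mem_filter] at hj
    have := hP j hj.2.1 hj.2.2
    rw [hFv, Finset.mem_filter]; exact ⟨Finset.mem_univ _, this⟩
  have heq : Fp.image σ = Fv := by
    apply Finset.eq_of_subset_of_card_le hsub
    rw [Finset.card_image_of_injective _ σ.injective, hFp, hFv,
      card_filter_interval n a0 l ha, card_filter_interval n k0 l hk]
  have : σ i ∈ Fv := by
    rw [hFv, Finset.mem_filter]; exact ⟨Finset.mem_univ _, h1, h2⟩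
  rw [← heq] at this
  obtain ⟨j, hj, hji⟩ := Finset.mem_image.mp this
  have := σ.injective hji
  subst this
  rw [hFp, Finset.mem_filter] at hj
  exact hj.2



section Perms

variable {n N l a0 k0 : ℕ}

def etaFun (hn : N + l = n + 1) (hl : 1 ≤ l) (ha : a0 + 1 ≤ N) (hk : k0 + 1 ≤ N)
    (σ : Equiv.Perm (Fin n)) (j : Fin N) : Fin N :=
  ⟨pC k0 l ((σ ⟨pE a0 l j, pE_bound hn hl ha j.isLt⟩ : Fin n) : ℕ),
    pC_bound hn hl hk (σ ⟨pE a0 l j, pE_bound hn hl ha j.isLt⟩).isLt⟩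

lemma etaFun_inj (hn : N + l = n + 1) (hl : 1 ≤ l) (ha : a0 + 1 ≤ N) (hk : k0 + 1 ≤ N)
    (σ : Equiv.Perm (Fin n)) (hP : BlockP a0 k0 l σ) :
    Function.Injective (etaFun hn hl ha hk σ) := by
  intro j1 j2 h
  have ha' : a0 + l ≤ n := by omega
  have hk' : k0 + l ≤ n := by omega
  unfold etaFun at h
  rw [Fin.mk.injEq] at h
  rcases pC_inj hl h with he | ⟨hb1, hb2⟩
  · have := σ.injective (Fin.val_injective he)
    rw [Fin.mk.injEq] at this
    exact Fin.val_injective (pE_inj hl this)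
  · have h1 := blockP_rev hP ha' hk' _ hb1.1 hb1.2
    have h2 := blockP_rev hP ha' hk' _ hb2.1 hb2.2
    simp only at h1 h2
    have e1 : (j1 : ℕ) = a0 := (pE_mem_block_iff hl).mp h1
    have e2 : (j2 : ℕ) = a0 := (pE_mem_block_iff hl).mp h2
    exact Fin.val_injective (e1.trans e2.symm)

noncomputable def etaPerm (hn : N + l = n + 1) (hl : 1 ≤ l) (ha : a0 + 1 ≤ N) (hk : k0 + 1 ≤ N)
    (σ : Equiv.Perm (Fin n)) (hP : BlockP a0 k0 l σ) : Equiv.Perm (Fin N) :=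
  Equiv.ofBijective _
    (Finite.injective_iff_bijective.mp (etaFun_inj hn hl ha hk σ hP))

lemma etaPerm_apply (hn : N + l = n + 1) (hl : 1 ≤ l) (ha : a0 + 1 ≤ N) (hk : k0 + 1 ≤ N)
    (σ : Equiv.Perm (Fin n)) (hP : BlockP a0 k0 l σ) (j : Fin N) :
    (etaPerm hn hl ha hk σ hP j : ℕ) =
      pC k0 l ((σ ⟨pE a0 l j, pE_bound hn hl ha j.isLt⟩ : Fin n) : ℕ) := rfl

def piFun (hl : 1 ≤ l) (ha' : a0 + l ≤ n) (σ : Equiv.Perm (Fin n))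
    (hP : BlockP a0 k0 l σ) (j : Fin l) : Fin l :=
  ⟨((σ ⟨a0 + (j : ℕ), by have := j.isLt; omega⟩ : Fin n) : ℕ) - k0, by
    have hb := hP ⟨a0 + (j : ℕ), by have := j.isLt; omega⟩
      (by show a0 ≤ a0 + (j : ℕ); omega) (by show a0 + (j : ℕ) < a0 + l; have := j.isLt; omega)
    omega⟩

lemma piFun_inj (hl : 1 ≤ l) (ha' : a0 + l ≤ n) (σ : Equiv.Perm (Fin n))
    (hP : BlockP a0 k0 l σ) : Function.Injective (piFun hl ha' σ hP) := by
  intro j1 j2 h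
  unfold piFun at h
  rw [Fin.mk.injEq] at h
  have hb1 := hP ⟨a0 + (j1 : ℕ), by have := j1.isLt; omega⟩
    (by show a0 ≤ a0 + (j1 : ℕ); omega) (by show a0 + (j1 : ℕ) < a0 + l; have := j1.isLt; omega)
  have hb2 := hP ⟨a0 + (j2 : ℕ), by have := j2.isLt; omega⟩
    (by show a0 ≤ a0 + (j2 : ℕ); omega) (by show a0 + (j2 : ℕ) < a0 + l; have := j2.isLt; omega)
  have : ((σ ⟨a0 + (j1 : ℕ), by have := j1.isLt; omega⟩ : Fin n) : ℕ) =
      ((σ ⟨a0 + (j2 : ℕ), by have := j2.isLt; omega⟩ : Fin n) : ℕ) := by omega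
  have := σ.injective (Fin.val_injective this)
  rw [Fin.mk.injEq] at this
  exact Fin.val_injective (by omega)

noncomputable def piPerm (hl : 1 ≤ l) (ha' : a0 + l ≤ n) (σ : Equiv.Perm (Fin n))
    (hP : BlockP a0 k0 l σ) : Equiv.Perm (Fin l) :=
  Equiv.ofBijective _ (Finite.injective_iff_bijective.mp (piFun_inj hl ha' σ hP))

lemma piPerm_apply (hl : 1 ≤ l) (ha' : a0 + l ≤ n) (σ : Equiv.Perm (Fin n))
    (hP : BlockP a0 k0 l σ) (j : Fin l) :
    (piPerm hl ha' σ hP j : ℕ) =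
      ((σ ⟨a0 + (j : ℕ), by have := j.isLt; omega⟩ : Fin n) : ℕ) - k0 := rfl

def sigmaFun (hn : N + l = n + 1) (hl : 1 ≤ l) (ha : a0 + 1 ≤ N) (hk : k0 + 1 ≤ N)
    (η : Equiv.Perm (Fin N)) (π : Equiv.Perm (Fin l)) (i : Fin n) : Fin n :=
  if h : a0 ≤ (i : ℕ) ∧ (i : ℕ) < a0 + l then
    ⟨k0 + (π ⟨(i : ℕ) - a0, by omega⟩ : ℕ), by
      have := (π ⟨(i : ℕ) - a0, by omega⟩).isLt; omega⟩
  else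
    ⟨pE k0 l ((η ⟨pC a0 l i, pC_bound hn hl ha i.isLt⟩ : Fin N) : ℕ),
      pE_bound hn hl hk (η ⟨pC a0 l i, pC_bound hn hl ha i.isLt⟩).isLt⟩

lemma sigmaFun_inj (hn : N + l = n + 1) (hl : 1 ≤ l) (ha : a0 + 1 ≤ N) (hk : k0 + 1 ≤ N)
    (η : Equiv.Perm (Fin N)) (π : Equiv.Perm (Fin l))
    (hη : ∀ jj : Fin N, (jj : ℕ) = a0 → (η jj : ℕ) = k0) :
    Function.Injective (sigmaFun hn hl ha hk η π) := by
  intro i1 i2 h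
  unfold sigmaFun at h
  by_cases h1 : a0 ≤ (i1 : ℕ) ∧ (i1 : ℕ) < a0 + l <;>
    by_cases h2 : a0 ≤ (i2 : ℕ) ∧ (i2 : ℕ) < a0 + l
  · rw [dif_pos h1, dif_pos h2, Fin.mk.injEq] at h
    have : (π ⟨(i1 : ℕ) - a0, by omega⟩ : ℕ) = (π ⟨(i2 : ℕ) - a0, by omega⟩ : ℕ) := by omega
    have := π.injective (Fin.val_injective this)
    rw [Fin.mk.injEq] at this
    exact Fin.val_injective (by omega)
  · -- i1 in block, i2 not: contradiction
    exfalso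
    rw [dif_pos h1, dif_neg h2, Fin.mk.injEq] at h
    have hlt := (π ⟨(i1 : ℕ) - a0, by omega⟩).isLt
    have hbm : k0 ≤ pE k0 l ((η ⟨pC a0 l i2, pC_bound hn hl ha i2.isLt⟩ : Fin N) : ℕ) ∧
        pE k0 l ((η ⟨pC a0 l i2, pC_bound hn hl ha i2.isLt⟩ : Fin N) : ℕ) < k0 + l := by omega
    have he : ((η ⟨pC a0 l i2, pC_bound hn hl ha i2.isLt⟩ : Fin N) : ℕ) = k0 :=
      (pE_mem_block_iff hl).mp hbm
    have hk0 : (η ⟨a0, by omega⟩ : ℕ) = k0 := hη _ rfl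
    have := η.injective (Fin.val_injective (he.trans hk0.symm))
    rw [Fin.mk.injEq] at this
    exact h2 ((pC_eq_left_iff hl).mp this)
  · exfalso
    rw [dif_neg h1, dif_pos h2, Fin.mk.injEq] at h
    have hlt := (π ⟨(i2 : ℕ) - a0, by omega⟩).isLt
    have hbm : k0 ≤ pE k0 l ((η ⟨pC a0 l i1, pC_bound hn hl ha i1.isLt⟩ : Fin N) : ℕ) ∧
        pE k0 l ((η ⟨pC a0 l i1, pC_bound hn hl ha i1.isLt⟩ : Fin N) : ℕ) < k0 + l := by omega
    have he : ((η ⟨pC a0 l i1, pC_bound hn hl ha i1.isLt⟩ : Fin N) : ℕ) = k0 :=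
      (pE_mem_block_iff hl).mp hbm
    have hk0 : (η ⟨a0, by omega⟩ : ℕ) = k0 := hη _ rfl
    have := η.injective (Fin.val_injective (he.trans hk0.symm))
    rw [Fin.mk.injEq] at this
    exact h1 ((pC_eq_left_iff hl).mp this)
  · rw [dif_neg h1, dif_neg h2, Fin.mk.injEq] at h
    have := pE_inj hl h
    have := η.injective (Fin.val_injective this)
    rw [Fin.mk.injEq] at this
    rcases pC_inj hl this with he | ⟨hb1, hb2⟩
    · exact Fin.val_injective he
    · exact absurd hb1 h1

noncomputable def sigmaPerm (hn : N + l = n + 1) (hl : 1 ≤ l) (ha : a0 + 1 ≤ N) (hk : k0 + 1 ≤ N)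
    (η : Equiv.Perm (Fin N)) (π : Equiv.Perm (Fin l))
    (hη : ∀ jj : Fin N, (jj : ℕ) = a0 → (η jj : ℕ) = k0) : Equiv.Perm (Fin n) :=
  Equiv.ofBijective _
    (Finite.injective_iff_bijective.mp (sigmaFun_inj hn hl ha hk η π hη))

lemma sigmaPerm_apply (hn : N + l = n + 1) (hl : 1 ≤ l) (ha : a0 + 1 ≤ N) (hk : k0 + 1 ≤ N)
    (η : Equiv.Perm (Fin N)) (π : Equiv.Perm (Fin l))
    (hη : ∀ jj : Fin N, (jj : ℕ) = a0 → (η jj : ℕ) = k0) (i : Fin n) :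
    sigmaPerm hn hl ha hk η π hη i = sigmaFun hn hl ha hk η π i := rfl

lemma sigmaPerm_blockP (hn : N + l = n + 1) (hl : 1 ≤ l) (ha : a0 + 1 ≤ N) (hk : k0 + 1 ≤ N)
    (η : Equiv.Perm (Fin N)) (π : Equiv.Perm (Fin l))
    (hη : ∀ jj : Fin N, (jj : ℕ) = a0 → (η jj : ℕ) = k0) :
    BlockP a0 k0 l (sigmaPerm hn hl ha hk η π hη) := by
  intro i hi1 hi2
  rw [sigmaPerm_apply]
  unfold sigmaFun
  rw [dif_pos ⟨hi1, hi2⟩]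
  have := (π ⟨(i : ℕ) - a0, by omega⟩).isLt
  simp only []
  omega


lemma fin_val_congr {n : ℕ} (σ : Equiv.Perm (Fin n)) {x y : Fin n} (h : (x : ℕ) = (y : ℕ)) :
    (σ x : ℕ) = (σ y : ℕ) := by rw [show x = y from Fin.val_injective h]

lemma sigmaFun_pos (hn : N + l = n + 1) (hl : 1 ≤ l) (ha : a0 + 1 ≤ N) (hk : k0 + 1 ≤ N)
    (η : Equiv.Perm (Fin N)) (π : Equiv.Perm (Fin l)) (i : Fin n)
    (h : a0 ≤ (i : ℕ) ∧ (i : ℕ) < a0 + l) :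
    (sigmaFun hn hl ha hk η π i : ℕ) = k0 + (π ⟨(i : ℕ) - a0, by omega⟩ : ℕ) := by
  unfold sigmaFun; rw [dif_pos h]

lemma sigmaFun_neg (hn : N + l = n + 1) (hl : 1 ≤ l) (ha : a0 + 1 ≤ N) (hk : k0 + 1 ≤ N)
    (η : Equiv.Perm (Fin N)) (π : Equiv.Perm (Fin l)) (i : Fin n)
    (h : ¬(a0 ≤ (i : ℕ) ∧ (i : ℕ) < a0 + l)) :
    (sigmaFun hn hl ha hk η π i : ℕ) =
      pE k0 l ((η ⟨pC a0 l i, pC_bound hn hl ha i.isLt⟩ : Fin N) : ℕ) := by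
  unfold sigmaFun; rw [dif_neg h]

lemma etaPerm_a0 (hn : N + l = n + 1) (hl : 1 ≤ l) (ha : a0 + 1 ≤ N) (hk : k0 + 1 ≤ N)
    (σ : Equiv.Perm (Fin n)) (hP : BlockP a0 k0 l σ) :
    ∀ jj : Fin N, (jj : ℕ) = a0 → (etaPerm hn hl ha hk σ hP jj : ℕ) = k0 := by
  intro jj hjj
  rw [etaPerm_apply]
  have hpe : pE a0 l (jj : ℕ) = a0 := by unfold pE; split_ifs <;> omega
  have hvc := fin_val_congr σ
    (x := ⟨pE a0 l jj, pE_bound hn hl ha jj.isLt⟩) (y := ⟨a0, by omega⟩) hpe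
  rw [hvc]
  have hb := hP ⟨a0, by omega⟩ (by simp) (by show a0 < a0 + l; omega)
  exact pC_block hb.1 hb.2

lemma sigma_reconstruct (hn : N + l = n + 1) (hl : 1 ≤ l) (ha : a0 + 1 ≤ N) (hk : k0 + 1 ≤ N)
    (σ : Equiv.Perm (Fin n)) (hP : BlockP a0 k0 l σ) :
    sigmaPerm hn hl ha hk (etaPerm hn hl ha hk σ hP) (piPerm hl (by omega) σ hP)
      (etaPerm_a0 hn hl ha hk σ hP) = σ := by
  apply Equiv.ext
  intro i
  apply Fin.val_injective
  rw [sigmaPerm_apply]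
  by_cases h : a0 ≤ (i : ℕ) ∧ (i : ℕ) < a0 + l
  · rw [sigmaFun_pos _ _ _ _ _ _ _ h, piPerm_apply]
    have hb := hP i h.1 h.2
    have hvc := fin_val_congr σ
      (x := ⟨a0 + ((⟨(i : ℕ) - a0, by omega⟩ : Fin l) : ℕ), by
        have : (i:ℕ) < n := i.isLt; show a0 + ((i:ℕ) - a0) < n; omega⟩) (y := i)
      (by show a0 + ((i:ℕ) - a0) = (i:ℕ); omega)
    rw [hvc]; omega
  · rw [sigmaFun_neg _ _ _ _ _ _ _ h, etaPerm_apply]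
    have hvc := fin_val_congr σ
      (x := ⟨pE a0 l ((⟨pC a0 l ↑i, pC_bound hn hl ha i.isLt⟩ : Fin N) : ℕ),
        pE_bound hn hl ha (Fin.is_lt _)⟩) (y := i)
      (by show pE a0 l (pC a0 l (i : ℕ)) = (i : ℕ); exact pE_pC hl h)
    rw [hvc]
    have hnb : ¬(k0 ≤ (σ i : ℕ) ∧ (σ i : ℕ) < k0 + l) := by
      intro hvb
      exact h (blockP_rev hP (by omega) (by omega) i hvb.1 hvb.2)
    exact pE_pC hl hnb

lemma eta_of_sigma (hn : N + l = n + 1) (hl : 1 ≤ l) (ha : a0 + 1 ≤ N) (hk : k0 + 1 ≤ N)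
    (η : Equiv.Perm (Fin N)) (π : Equiv.Perm (Fin l))
    (hη : ∀ jj : Fin N, (jj : ℕ) = a0 → (η jj : ℕ) = k0)
    (hP : BlockP a0 k0 l (sigmaPerm hn hl ha hk η π hη)) :
    etaPerm hn hl ha hk (sigmaPerm hn hl ha hk η π hη) hP = η := by
  apply Equiv.ext
  intro j
  apply Fin.val_injective
  rw [etaPerm_apply]
  by_cases hj : (j : ℕ) = a0
  · have hx : ((⟨pE a0 l (j : ℕ), pE_bound hn hl ha j.isLt⟩ : Fin n) : ℕ) = a0 := by
      show pE a0 l (j : ℕ) = a0; unfold pE; split_ifs <;> omega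
    rw [fin_val_congr (sigmaPerm hn hl ha hk η π hη) (y := ⟨a0, by omega⟩) hx,
      sigmaPerm_apply, sigmaFun_pos _ _ _ _ _ _ _
        ⟨by show a0 ≤ a0; omega, by show a0 < a0 + l; omega⟩]
    have hlt := (π ⟨((⟨a0, by omega⟩ : Fin n) : ℕ) - a0, by show a0 - a0 < l; omega⟩).isLt
    rw [pC_block (by omega) (by omega), hη j hj]
  · have h' : ¬(a0 ≤ ((⟨pE a0 l (j : ℕ), pE_bound hn hl ha j.isLt⟩ : Fin n) : ℕ) ∧
        ((⟨pE a0 l (j : ℕ), pE_bound hn hl ha j.isLt⟩ : Fin n) : ℕ) < a0 + l) := by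
      intro hb
      exact hj ((pE_mem_block_iff hl).mp hb)
    rw [sigmaPerm_apply, sigmaFun_neg _ _ _ _ _ _ _ h']
    rw [fin_val_congr η (y := j) (by show pC a0 l (pE a0 l (j : ℕ)) = (j : ℕ); exact pC_pE hl)]
    exact pC_pE hl

lemma pi_of_sigma (hn : N + l = n + 1) (hl : 1 ≤ l) (ha : a0 + 1 ≤ N) (hk : k0 + 1 ≤ N)
    (η : Equiv.Perm (Fin N)) (π : Equiv.Perm (Fin l))
    (hη : ∀ jj : Fin N, (jj : ℕ) = a0 → (η jj : ℕ) = k0)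
    (hP : BlockP a0 k0 l (sigmaPerm hn hl ha hk η π hη)) :
    piPerm hl (by omega) (sigmaPerm hn hl ha hk η π hη) hP = π := by
  apply Equiv.ext
  intro j
  apply Fin.val_injective
  rw [piPerm_apply, sigmaPerm_apply, sigmaFun_pos _ _ _ _ _ _ _
    ⟨by show a0 ≤ a0 + (j : ℕ); omega,
     by have := j.isLt; show a0 + (j : ℕ) < a0 + l; omega⟩]
  rw [fin_val_congr π (y := j) (by show a0 + (j : ℕ) - a0 = (j : ℕ); omega)]
  omega

lemma contains_of_pi {m : ℕ} (hl : 1 ≤ l) (ha' : a0 + l ≤ n) (σ : Equiv.Perm (Fin n))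
    (hP : BlockP a0 k0 l σ) (τf : Fin m → Fin m)
    (h : Contains ⇑(piPerm hl ha' σ hP) τf) : Contains ⇑σ τf := by
  obtain ⟨g, hg, hord⟩ := h
  refine ⟨fun j => ⟨a0 + (g j : ℕ), by have := (g j).isLt; omega⟩, ?_, ?_⟩
  · intro j j' hjj
    have := hg hjj
    rw [Fin.lt_def] at this ⊢
    simp only []
    omega
  · intro j j'
    beta_reduce
    rw [← hord j j', Fin.lt_def, Fin.lt_def, piPerm_apply, piPerm_apply]
    have h1 := hP ⟨a0 + (g j : ℕ), by have := (g j).isLt; omega⟩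
      (by show a0 ≤ a0 + (g j : ℕ); omega)
      (by have := (g j).isLt; show a0 + (g j : ℕ) < a0 + l; omega)
    have h2 := hP ⟨a0 + (g j' : ℕ), by have := (g j').isLt; omega⟩
      (by show a0 ≤ a0 + (g j' : ℕ); omega)
      (by have := (g j').isLt; show a0 + (g j' : ℕ) < a0 + l; omega)
    omega

lemma notblock_of_val (hn : N + l = n + 1) (hl : 1 ≤ l) (ha : a0 + 1 ≤ N)
    (hk : k0 + 1 ≤ N) (σ : Equiv.Perm (Fin n)) (hP : BlockP a0 k0 l σ) (x : Fin n)
    (h : ¬(a0 ≤ (x : ℕ) ∧ (x : ℕ) < a0 + l)) :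
    ¬(k0 ≤ (σ x : ℕ) ∧ (σ x : ℕ) < k0 + l) := by
  intro hb
  exact h (blockP_rev hP (by omega) (by omega) x hb.1 hb.2)

lemma pC_val_lt_iff (hn : N + l = n + 1) (hl : 1 ≤ l) (ha : a0 + 1 ≤ N) (hk : k0 + 1 ≤ N)
    (σ : Equiv.Perm (Fin n)) (hP : BlockP a0 k0 l σ) (x y : Fin n)
    (hnb : ¬((a0 ≤ (x : ℕ) ∧ (x : ℕ) < a0 + l) ∧ (a0 ≤ (y : ℕ) ∧ (y : ℕ) < a0 + l)) ∨ x = y) :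
    (pC k0 l (σ x : ℕ) < pC k0 l (σ y : ℕ)) ↔ (σ x : ℕ) < (σ y : ℕ) := by
  rcases hnb with hnb | rfl
  · constructor
    · intro hlt
      by_contra hge
      have hle : (σ y : ℕ) ≤ (σ x : ℕ) := by omega
      have h2 := pC_mono (c := k0) (L := l) hl hle
      omega
    · intro hlt
      apply pC_lt hl hlt
      rcases Decidable.not_and_iff_or_not.mp hnb with hx | hy
      · exact Or.inl (notblock_of_val hn hl ha hk σ hP x hx)
      · exact Or.inr (notblock_of_val hn hl ha hk σ hP y hy)
  · simp

lemma contains_of_eta {m : ℕ} (hn : N + l = n + 1) (hl : 1 ≤ l) (ha : a0 + 1 ≤ N)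
    (hk : k0 + 1 ≤ N) (σ : Equiv.Perm (Fin n)) (hP : BlockP a0 k0 l σ) (τf : Fin m → Fin m)
    (h : Contains ⇑(etaPerm hn hl ha hk σ hP) τf) : Contains ⇑σ τf := by
  obtain ⟨g, hg, hord⟩ := h
  refine ⟨fun j => ⟨pE a0 l ((g j : ℕ)), pE_bound hn hl ha (g j).isLt⟩, ?_, ?_⟩
  · intro j j' hjj
    have := hg hjj
    rw [Fin.lt_def] at this ⊢
    exact pE_lt hl this
  · intro j j'
    beta_reduce
    rw [← hord j j', Fin.lt_def, Fin.lt_def, etaPerm_apply, etaPerm_apply]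
    apply Iff.symm
    apply pC_val_lt_iff hn hl ha hk σ hP
    by_cases hgeq : g j = g j'
    · right
      apply Fin.val_injective
      show pE a0 l ((g j : ℕ)) = pE a0 l ((g j' : ℕ))
      rw [hgeq]
    · left
      intro ⟨hb1, hb2⟩
      apply hgeq
      apply Fin.val_injective
      have e1 := (pE_mem_block_iff hl).mp hb1
      have e2 := (pE_mem_block_iff hl).mp hb2
      omega

lemma etaPerm_pC (hn : N + l = n + 1) (hl : 1 ≤ l) (ha : a0 + 1 ≤ N) (hk : k0 + 1 ≤ N)
    (σ : Equiv.Perm (Fin n)) (hP : BlockP a0 k0 l σ) (x : Fin n) :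
    (etaPerm hn hl ha hk σ hP ⟨pC a0 l x, pC_bound hn hl ha x.isLt⟩ : ℕ) =
      pC k0 l ((σ x : ℕ)) := by
  rw [etaPerm_apply]
  by_cases hb : a0 ≤ (x : ℕ) ∧ (x : ℕ) < a0 + l
  · have h1 : pE a0 l (pC a0 l (x : ℕ)) = a0 := by
      rw [pC_block hb.1 hb.2]; unfold pE; split_ifs <;> omega
    rw [fin_val_congr σ (y := ⟨a0, by omega⟩) h1]
    have hb1 := hP ⟨a0, by omega⟩ (by show a0 ≤ a0; omega) (by show a0 < a0 + l; omega)
    have hb2 := hP x hb.1 hb.2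
    rw [pC_block hb1.1 hb1.2, pC_block hb2.1 hb2.2]
  · rw [fin_val_congr σ (y := x) (pE_pC hl hb)]

lemma contains_split {m : ℕ} (hn : N + l = n + 1) (hl : 1 ≤ l) (ha : a0 + 1 ≤ N)
    (hk : k0 + 1 ≤ N) (σ : Equiv.Perm (Fin n)) (hP : BlockP a0 k0 l σ)
    (τ : Equiv.Perm (Fin m)) (hτ : ClusterFree τ) (hcon : Contains ⇑σ ⇑τ) :
    Contains ⇑(etaPerm hn hl ha hk σ hP) ⇑τ ∨ Contains ⇑(piPerm hl (by omega) σ hP) ⇑τ := by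
  obtain ⟨f, hf, hord⟩ := hcon
  set B := Finset.univ.filter
    (fun j : Fin m => a0 ≤ (f j : ℕ) ∧ (f j : ℕ) < a0 + l) with hB
  have hmemB : ∀ j : Fin m, j ∈ B ↔ (a0 ≤ (f j : ℕ) ∧ (f j : ℕ) < a0 + l) := by
    intro j; rw [hB, Finset.mem_filter]; simp
  by_cases hc1 : B.card ≤ 1
  · -- at most one index lands in the block: occurrence descends to η
    left
    refine ⟨fun j => ⟨pC a0 l ((f j : ℕ)), pC_bound hn hl ha (f j).isLt⟩, ?_, ?_⟩
    · intro j j' hjj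
      have hflt := hf hjj
      rw [Fin.lt_def] at hflt ⊢
      apply pC_lt hl hflt
      by_contra hcon2
      push_neg at hcon2
      have hj : j ∈ B := (hmemB j).mpr ⟨hcon2.1.1, hcon2.1.2⟩
      have hj' : j' ∈ B := (hmemB j').mpr ⟨hcon2.2.1, hcon2.2.2⟩
      have : 1 < B.card := Finset.one_lt_card.mpr ⟨j, hj, j', hj', fun h => by
        subst h; exact lt_irrefl _ hjj⟩
      omega
    · intro j j'
      beta_reduce
      rw [← hord j j', Fin.lt_def, Fin.lt_def, etaPerm_pC, etaPerm_pC]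
      apply pC_val_lt_iff hn hl ha hk σ hP
      by_cases hjj : j = j'
      · right; rw [hjj]
      · left
        intro ⟨hb1, hb2⟩
        have h1 : j ∈ B := (hmemB j).mpr hb1
        have h2 : j' ∈ B := (hmemB j').mpr hb2
        have : 1 < B.card := Finset.one_lt_card.mpr ⟨j, h1, j', h2, hjj⟩
        omega
  · by_cases hcm : B.card = m
    · -- everything in the block: occurrence descends to π
      right
      have hall : ∀ j : Fin m, a0 ≤ (f j : ℕ) ∧ (f j : ℕ) < a0 + l := by
        intro j
        have : B = Finset.univ := Finset.eq_univ_of_card B (by rw [hcm, Fintype.card_fin])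
        exact (hmemB j).mp (this ▸ Finset.mem_univ j)
      refine ⟨fun j => ⟨(f j : ℕ) - a0, by have := (hall j).2; omega⟩, ?_, ?_⟩
      · intro j j' hjj
        have hflt := hf hjj
        rw [Fin.lt_def] at hflt ⊢
        have := (hall j).1
        show (f j : ℕ) - a0 < (f j' : ℕ) - a0
        omega
      · intro j j'
        beta_reduce
        rw [← hord j j', Fin.lt_def, Fin.lt_def, piPerm_apply, piPerm_apply]
        have e1 := fin_val_congr σ
          (x := (⟨a0 + (((⟨(f j : ℕ) - a0, by have := (hall j).2; omega⟩ : Fin l)) : ℕ),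
            by have := (hall j).2; show a0 + ((f j : ℕ) - a0) < n; have := (f j).isLt; omega⟩
            : Fin n)) (y := f j)
          (by show a0 + ((f j : ℕ) - a0) = (f j : ℕ); have := (hall j).1; omega)
        have e2 := fin_val_congr σ
          (x := (⟨a0 + (((⟨(f j' : ℕ) - a0, by have := (hall j').2; omega⟩ : Fin l)) : ℕ),
            by have := (hall j').2; show a0 + ((f j' : ℕ) - a0) < n; have := (f j').isLt; omega⟩
            : Fin n)) (y := f j')
          (by show a0 + ((f j' : ℕ) - a0) = (f j' : ℕ); have := (hall j').1; omega)
        rw [e1, e2]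
        have hv1 := hP (f j) (hall j).1 (hall j).2
        have hv2 := hP (f j') (hall j').1 (hall j').2
        omega
    · -- middle case: contradiction with cluster-freeness
      exfalso
      have hcle : B.card ≤ m := le_trans (Finset.card_le_univ B) (by rw [Fintype.card_fin])
      have hc2 : 2 ≤ B.card := by omega
      have hclt : B.card < m := by omega
      have hne : B.Nonempty := Finset.card_pos.mp (by omega)
      set c := B.card with hc
      -- positions
      set Bv := B.image (fun j : Fin m => (j : ℕ)) with hBv
      have hBvcard : Bv.card = c := Finset.card_image_of_injective B Fin.val_injective
      have hBvne : Bv.Nonempty := hne.image _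
      set a' := Bv.min' hBvne with ha'
      set b' := Bv.max' hBvne with hb'
      have hmemBv : ∀ x : ℕ, x ∈ Bv ↔ ∃ j ∈ B, (j : ℕ) = x := by
        intro x; rw [hBv, Finset.mem_image]
      have hb'lt : b' < m := by
        obtain ⟨j, _, hj⟩ := (hmemBv b').mp (Bv.max'_mem hBvne)
        rw [← hj]; exact j.isLt
      have hconvB : ∀ x : ℕ, a' ≤ x → x ≤ b' → x ∈ Bv := by
        intro x hx1 hx2
        obtain ⟨j1, hj1B, hj1⟩ := (hmemBv a').mp (Bv.min'_mem hBvne)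
        obtain ⟨j2, hj2B, hj2⟩ := (hmemBv b').mp (Bv.max'_mem hBvne)
        have hxm : x < m := by omega
        have hle1 : f j1 ≤ f (⟨x, hxm⟩ : Fin m) :=
          hf.monotone (by rw [Fin.le_def]; show (j1 : ℕ) ≤ x; omega)
        have hle2 : f (⟨x, hxm⟩ : Fin m) ≤ f j2 :=
          hf.monotone (by rw [Fin.le_def]; show x ≤ (j2 : ℕ); omega)
        rw [Fin.le_def] at hle1 hle2
        have hbk1 := (hmemB j1).mp hj1B
        have hbk2 := (hmemB j2).mp hj2B
        refine (hmemBv x).mpr ⟨⟨x, hxm⟩, (hmemB _).mpr ⟨by omega, by omega⟩, rfl⟩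
      have ha'b' : a' ≤ b' := Bv.min'_le b' (Bv.max'_mem hBvne)
      have hBvIcc : Bv = Finset.Icc a' b' := by
        apply Finset.Subset.antisymm
        · intro x hx
          rw [Finset.mem_Icc]
          exact ⟨Bv.min'_le x hx, Bv.le_max' x hx⟩
        · intro x hx
          rw [Finset.mem_Icc] at hx
          exact hconvB x hx.1 hx.2
      have hccard : c = b' + 1 - a' := by
        rw [← hBvcard, hBvIcc, Nat.card_Icc]
      have hBvIco : Bv = Finset.Ico a' (a' + c) := by
        rw [hBvIcc]; ext x; rw [Finset.mem_Icc, Finset.mem_Ico]; omega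
      -- values
      set Vv := B.image (fun j : Fin m => (τ j : ℕ)) with hVv
      have hVvcard : Vv.card = c := Finset.card_image_of_injective B
        (fun x y h => τ.injective (Fin.val_injective h))
      have hVvne : Vv.Nonempty := hne.image _
      set k' := Vv.min' hVvne with hk'
      set v' := Vv.max' hVvne with hv'
      have hmemVv : ∀ x : ℕ, x ∈ Vv ↔ ∃ j ∈ B, (τ j : ℕ) = x := by
        intro x; rw [hVv, Finset.mem_image]
      have hv'lt : v' < m := by
        obtain ⟨j, _, hj⟩ := (hmemVv v').mp (Vv.max'_mem hVvne)
        rw [← hj]; exact (τ j).isLt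
      have hconvV : ∀ x : ℕ, k' ≤ x → x ≤ v' → x ∈ Vv := by
        intro x hx1 hx2
        obtain ⟨j1, hj1B, hj1⟩ := (hmemVv k').mp (Vv.min'_mem hVvne)
        obtain ⟨j2, hj2B, hj2⟩ := (hmemVv v').mp (Vv.max'_mem hVvne)
        have hxm : x < m := by omega
        set j0 := τ.symm (⟨x, hxm⟩ : Fin m) with hj0
        have hτj0 : (τ j0 : ℕ) = x := by rw [hj0, Equiv.apply_symm_apply]
        have hbk1 := hP (f j1) ((hmemB j1).mp hj1B).1 ((hmemB j1).mp hj1B).2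
        have hbk2 := hP (f j2) ((hmemB j2).mp hj2B).1 ((hmemB j2).mp hj2B).2
        -- σ (f j1) ≤ σ (f j0)
        have hle1 : (σ (f j1) : ℕ) ≤ (σ (f j0) : ℕ) := by
          rcases eq_or_lt_of_le (show (τ j1 : ℕ) ≤ (τ j0 : ℕ) by omega) with he | hlt
          · rw [τ.injective (Fin.val_injective he)]
          · exact le_of_lt ((hord j1 j0).mpr (by rw [Fin.lt_def]; exact hlt))
        have hle2 : (σ (f j0) : ℕ) ≤ (σ (f j2) : ℕ) := by
          rcases eq_or_lt_of_le (show (τ j0 : ℕ) ≤ (τ j2 : ℕ) by omega) with he | hlt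
          · rw [τ.injective (Fin.val_injective he)]
          · exact le_of_lt ((hord j0 j2).mpr (by rw [Fin.lt_def]; exact hlt))
        have hblk := blockP_rev hP (by omega) (by omega) (f j0) (by omega) (by omega)
        exact (hmemVv x).mpr ⟨j0, (hmemB j0).mpr hblk, hτj0⟩
      have hk'v' : k' ≤ v' := Vv.min'_le v' (Vv.max'_mem hVvne)
      have hVvIcc : Vv = Finset.Icc k' v' := by
        apply Finset.Subset.antisymm
        · intro x hx
          rw [Finset.mem_Icc]
          exact ⟨Vv.min'_le x hx, Vv.le_max' x hx⟩
        · intro x hx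
          rw [Finset.mem_Icc] at hx
          exact hconvV x hx.1 hx.2
      have hccard' : c = v' + 1 - k' := by
        rw [← hVvcard, hVvIcc, Nat.card_Icc]
      have hVvIco : Vv = Finset.Ico k' (k' + c) := by
        rw [hVvIcc]; ext x; rw [Finset.mem_Icc, Finset.mem_Ico]; omega
      -- build the forbidden cluster in τ
      apply hτ c (a' + 1) (k' + 1) hc2 (by omega) (by omega) (by omega)
      unfold ClusterAt
      have hfilter : (Finset.univ.filter fun i : Fin m =>
          a' + 1 ≤ (i : ℕ) + 1 ∧ (i : ℕ) + 1 < a' + 1 + c) = B := by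
        ext i
        rw [Finset.mem_filter]
        constructor
        · rintro ⟨-, h1, h2⟩
          have : (i : ℕ) ∈ Bv := by rw [hBvIco, Finset.mem_Ico]; omega
          obtain ⟨j, hjB, hj⟩ := (hmemBv _).mp this
          rwa [← Fin.val_injective hj]
        · intro hi
          have : (i : ℕ) ∈ Bv := (hmemBv _).mpr ⟨i, hi, rfl⟩
          rw [hBvIco, Finset.mem_Ico] at this
          exact ⟨Finset.mem_univ _, by omega, by omega⟩
      rw [hfilter]
      ext x
      rw [Finset.mem_image, Finset.mem_Ico]
      constructor
      · rintro ⟨i, hiB, rfl⟩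
        have : (τ i : ℕ) ∈ Vv := (hmemVv _).mpr ⟨i, hiB, rfl⟩
        rw [hVvIco, Finset.mem_Ico] at this
        omega
      · rintro ⟨h1, h2⟩
        have : x - 1 ∈ Vv := by rw [hVvIco, Finset.mem_Ico]; omega
        obtain ⟨j, hjB, hj⟩ := (hmemVv _).mp this
        exact ⟨j, hjB, by omega⟩

lemma sigmaPerm_congr (hn : N + l = n + 1) (hl : 1 ≤ l) (ha : a0 + 1 ≤ N) (hk : k0 + 1 ≤ N)
    {η η' : Equiv.Perm (Fin N)} {π π' : Equiv.Perm (Fin l)}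
    {hη : ∀ jj : Fin N, (jj : ℕ) = a0 → (η jj : ℕ) = k0}
    {hη' : ∀ jj : Fin N, (jj : ℕ) = a0 → (η' jj : ℕ) = k0}
    (he : η = η') (hp : π = π') :
    sigmaPerm hn hl ha hk η π hη = sigmaPerm hn hl ha hk η' π' hη' := by
  subst he; subst hp; rfl

end Perms

end Stmt18A

/-- for cluster-free `τ`, the number of `τ`-avoiding permutations in
`A^{(n)}_{l;k;a}` equals `|{η ∈ S_{n-l+1}(τ) : η_a = k}| ⬝ |S_l(τ)|`. -/
theorem avoid_cluster_at_position_exact (m : ℕ) (hm : 2 ≤ m) (τ : Equiv.Perm (Fin m))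
    (hτ : ClusterFree τ)
    (n : ℕ) (hn : 3 ≤ n) (l : ℕ) (hl2 : 2 ≤ l) (hln : l ≤ n - 1)
    (k a : ℕ) (hk1 : 1 ≤ k) (hk2 : k ≤ n - l + 1) (ha1 : 1 ≤ a) (ha2 : a ≤ n - l + 1) :
    {σ : Equiv.Perm (Fin n) | ClusterAt l k a σ ∧ Avoids ⇑σ ⇑τ}.ncard =
      {η : Equiv.Perm (Fin (n - l + 1)) | Avoids ⇑η ⇑τ ∧
        ∃ i : Fin (n - l + 1), (i : ℕ) + 1 = a ∧ (η i : ℕ) + 1 = k}.ncard *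
      (AvoidSet l τ).ncard := by
  classical
  obtain ⟨a0, rfl⟩ : ∃ a0, a = a0 + 1 := ⟨a - 1, by omega⟩
  obtain ⟨k0, rfl⟩ : ∃ k0, k = k0 + 1 := ⟨k - 1, by omega⟩
  set N := n - l + 1 with hNdef
  have hl : 1 ≤ l := by omega
  have hnN : N + l = n + 1 := by omega
  have ha : a0 + 1 ≤ N := by omega
  have hkN : k0 + 1 ≤ N := by omega
  have ha' : a0 + l ≤ n := by omega
  have hk' : k0 + l ≤ n := by omega
  have hPmem : ∀ σ : Equiv.Perm (Fin n), ClusterAt l (k0 + 1) (a0 + 1) σ →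
      Stmt18A.BlockP a0 k0 l σ :=
    fun σ h => (Stmt18A.clusterAt_iff_blockP ha' hk').mp h
  rw [← Nat.card_coe_set_eq, ← Nat.card_coe_set_eq, ← Nat.card_coe_set_eq,
    ← Nat.card_prod]
  let Φ : {σ : Equiv.Perm (Fin n) // ClusterAt l (k0 + 1) (a0 + 1) σ ∧ Avoids ⇑σ ⇑τ} →
      ({η : Equiv.Perm (Fin N) // Avoids ⇑η ⇑τ ∧
          ∃ i : Fin N, (i : ℕ) + 1 = a0 + 1 ∧ (η i : ℕ) + 1 = k0 + 1} ×
        {π : Equiv.Perm (Fin l) // Avoids ⇑π ⇑τ}) :=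
    fun s =>
      (⟨Stmt18A.etaPerm hnN hl ha hkN s.1 (hPmem s.1 s.2.1),
          fun hc => s.2.2 (Stmt18A.contains_of_eta hnN hl ha hkN s.1 (hPmem s.1 s.2.1) ⇑τ hc),
          ⟨⟨a0, by omega⟩, rfl, by
            rw [Stmt18A.etaPerm_a0 hnN hl ha hkN s.1 (hPmem s.1 s.2.1) ⟨a0, by omega⟩ rfl]⟩⟩,
        ⟨Stmt18A.piPerm hl ha' s.1 (hPmem s.1 s.2.1),
          fun hc => s.2.2 (Stmt18A.contains_of_pi hl ha' s.1 (hPmem s.1 s.2.1) ⇑τ hc)⟩)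
  refine Nat.card_eq_of_bijective Φ ⟨?_, ?_⟩
  · -- injective
    intro s1 s2 h
    simp only [Φ, Prod.ext_iff, Subtype.ext_iff] at h
    have he : Stmt18A.etaPerm hnN hl ha hkN s1.1 (hPmem s1.1 s1.2.1) =
        Stmt18A.etaPerm hnN hl ha hkN s2.1 (hPmem s2.1 s2.2.1) := congrArg (fun p => p.1.1) h
    have hp : Stmt18A.piPerm hl ha' s1.1 (hPmem s1.1 s1.2.1) =
        Stmt18A.piPerm hl ha' s2.1 (hPmem s2.1 s2.2.1) := congrArg (fun p => p.2.1) h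
    apply Subtype.ext
    rw [← Stmt18A.sigma_reconstruct hnN hl ha hkN s1.1 (hPmem s1.1 s1.2.1),
      ← Stmt18A.sigma_reconstruct hnN hl ha hkN s2.1 (hPmem s2.1 s2.2.1)]
    exact Stmt18A.sigmaPerm_congr hnN hl ha hkN he hp
  · -- surjective
    rintro ⟨⟨η, hη1, hη2⟩, ⟨π, hπ⟩⟩
    have hηa : ∀ jj : Fin N, (jj : ℕ) = a0 → (η jj : ℕ) = k0 := by
      obtain ⟨i, hi1, hi2⟩ := hη2
      intro jj hjj
      have : jj = i := Fin.val_injective (by omega)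
      subst this; omega
    set σ := Stmt18A.sigmaPerm hnN hl ha hkN η π hηa with hσdef
    have hPσ : Stmt18A.BlockP a0 k0 l σ := Stmt18A.sigmaPerm_blockP hnN hl ha hkN η π hηa
    have hCl : ClusterAt l (k0 + 1) (a0 + 1) σ :=
      (Stmt18A.clusterAt_iff_blockP ha' hk').mpr hPσ
    have hAv : Avoids ⇑σ ⇑τ := by
      intro hc
      rcases Stmt18A.contains_split hnN hl ha hkN σ hPσ τ hτ hc with h | h
      · rw [Stmt18A.eta_of_sigma hnN hl ha hkN η π hηa hPσ] at h
        exact hη1 h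
      · rw [Stmt18A.pi_of_sigma hnN hl ha hkN η π hηa hPσ] at h
        exact hπ h
    refine ⟨⟨σ, hCl, hAv⟩, ?_⟩
    simp only [Φ]
    refine Prod.ext ?_ ?_
    · exact Subtype.ext (Stmt18A.eta_of_sigma hnN hl ha hkN η π hηa (hPmem σ hCl))
    · exact Subtype.ext (Stmt18A.pi_of_sigma hnN hl ha hkN η π hηa (hPmem σ hCl))
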